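/- More generally, for scaling factors β ∈ ℝ^p with 0 ≤ β ≤ 1 and center c ∈ ℝ^d satisfying Hc + |HG|β ≤ h, the scaled zonotope Z(c, G·diag(β)) = {c + Σᵢ γᵢβᵢg⁽ⁱ⁾ : γᵢ ∈ [-1,1]} is contained in the polyhedron {z : Hz ≤ h}. -/

import Mathlib

/-- For 0 ≤ β ≤ 1 with Hc + |HG|β ≤ h, the scaled zonotope
Z(c, G·diag(β)) is contained in {z : Hz ≤ h}. -/
theorem stmt_16 (d p q : ℕ) (H : Matrix (Fin q) (Fin d) ℝ) (h : Fin q → ℝ)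
    (c : Fin d → ℝ) (G : Matrix (Fin d) (Fin p) ℝ) (β : Fin p → ℝ)
    (hβ : ∀ j, 0 ≤ β j ∧ β j ≤ 1)
    (hcond : ∀ i, H.mulVec c i + ∑ j, |(H * G) i j| * β j ≤ h i) :
    ((fun γ => c + (G * Matrix.diagonal β).mulVec γ) '' Set.Icc (-1 : Fin p → ℝ) 1) ⊆
      {z : Fin d → ℝ | ∀ i, H.mulVec z i ≤ h i} := by
  rintro z ⟨γ, hγ, rfl⟩ i
  obtain ⟨h1, h2⟩ := hγ
  have key : H.mulVec (c + (G * Matrix.diagonal β).mulVec γ) i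
      = H.mulVec c i + ∑ j, (H * G) i j * β j * γ j := by
    simp only [Matrix.mulVec_add, Pi.add_apply]
    congr 1
    rw [← Matrix.mulVec_mulVec, Matrix.mulVec_mulVec]
    simp [Matrix.mulVec, dotProduct, Matrix.diagonal_apply, ite_mul, mul_assoc]
  rw [key]
  refine le_trans (add_le_add_right (Finset.sum_le_sum fun j _ => ?_) _) (hcond i)
  have hab : |γ j| ≤ 1 := by
    rw [abs_le]; exact ⟨h1 j, h2 j⟩
  calc (H * G) i j * β j * γ j ≤ |(H * G) i j * β j * γ j| := le_abs_self _
    _ = |(H * G) i j| * β j * |γ j| := by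
        rw [abs_mul, abs_mul, abs_of_nonneg (hβ j).1]
    _ ≤ |(H * G) i j| * β j * 1 := by
        exact mul_le_mul_of_nonneg_left hab (mul_nonneg (abs_nonneg _) (hβ j).1)
    _ = |(H * G) i j| * β j := mul_one _
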